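/- No infinite branch of the standard binary tree is definable: for every branch s : ℕ → {0,1}, the set {s↾m : m ∈ ℕ} of finite initial segments of s is not definable with parameters in the structure (2^{<ω}, ⊑), i.e., it is not of the form {u : (2^{<ω}, ⊑) ⊨ φ(u, c̄)} for any first-order formula φ in the language of partial orders and any finite tuple c̄ of parameters from 2^{<ω}. -/
import Mathlib


open FirstOrder FirstOrder.Language

namespace BinaryTree

/-- The finite initial segment `s↾m = (s 0, …, s (m-1))` of a branch `s : ℕ → Bool`,
as a finite binary sequence (a list of Booleans). -/
def seg (s : ℕ → Bool) (m : ℕ) : List Bool :=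
  List.ofFn fun i : Fin m => s i

/-- The language of partial orders: a single binary relation symbol `⊑`. -/
inductive PRel : ℕ → Type
  | sqle : PRel 2

/-- The language consisting of the single binary relation `⊑`. -/
def prefixLang : Language := ⟨fun _ => Empty, PRel⟩

/-- The standard binary meet-tree `2^{<ω}` of finite binary sequences, as a structure in
the language of partial orders, with `⊑` interpreted as the initial-segment relation. -/
instance : prefixLang.Structure (List Bool) where
  funMap := fun f _ => Empty.elim f
  RelMap {_n} r x :=
    match r with
    | .sqle => (x 0) <+: (x 1)

/-!
STATEMENT 8: No infinite branch of the standard binary tree is definable: for every branch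
`s : ℕ → {0,1}`, the set `{s↾m : m ∈ ℕ}` of finite initial segments of `s` is not definable
with parameters in the structure `(2^{<ω}, ⊑)`.
-/

lemma seg_length (s : ℕ → Bool) (m : ℕ) : (seg s m).length = m := by
  simp [seg]

lemma seg_take (s : ℕ → Bool) {m n : ℕ} (h : m ≤ n) : (seg s n).take m = seg s m := by
  apply List.ext_getElem
  · simp [seg]; omega
  · intro i h1 h2
    simp only [seg, List.getElem_take, List.getElem_ofFn]

lemma seg_prefix (s : ℕ → Bool) {m n : ℕ} (h : m ≤ n) : seg s m <+: seg s n := by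
  rw [← seg_take s h]; exact List.take_prefix _ _

lemma seg_succ (s : ℕ → Bool) (m : ℕ) : seg s (m + 1) = seg s m ++ [s m] := by
  apply List.ext_getElem
  · simp [seg]
  · intro i h1 h2
    simp only [seg, List.getElem_ofFn]
    rcases Nat.lt_or_ge i m with h | h
    · rw [List.getElem_append_left (by simpa [seg])]
      simp [seg]
    · have : i = m := by simp [seg] at h1; omega
      subst this
      rw [List.getElem_append_right (by simp [seg])]
      simp [seg]

/-- The "flip at a/b" involution: swap the subtrees above `a` and above `b`. -/
def flipAB (a b : List Bool) (u : List Bool) : List Bool :=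
  if a <+: u then b ++ u.drop a.length
  else if b <+: u then a ++ u.drop b.length
  else u

section flip

variable {a b c : List Bool} (hlen : a.length = b.length) (hne : a ≠ b)

include hlen hne in
lemma flip_not_prefix {u : List Bool} (h : b <+: u) : ¬ a <+: u := by
  intro ha
  apply hne
  rw [List.prefix_iff_eq_take.mp ha, List.prefix_iff_eq_take.mp h, hlen]

include hlen hne in
lemma flipAB_of_a {u : List Bool} (h : a <+: u) :
    flipAB a b u = b ++ u.drop a.length := by
  rw [flipAB, if_pos h]

include hlen hne in
lemma flipAB_of_b {u : List Bool} (h : b <+: u) :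
    flipAB a b u = a ++ u.drop b.length := by
  rw [flipAB, if_neg (flip_not_prefix hlen hne h), if_pos h]

lemma flipAB_of_none {u : List Bool} (h1 : ¬ a <+: u) (h2 : ¬ b <+: u) :
    flipAB a b u = u := by
  rw [flipAB, if_neg h1, if_neg h2]

include hlen hne in
lemma flipAB_invol (u : List Bool) : flipAB a b (flipAB a b u) = u := by
  by_cases ha : a <+: u
  · rw [flipAB_of_a hlen hne ha,
      flipAB_of_b hlen hne (List.prefix_append _ _), List.drop_left]
    exact List.prefix_iff_eq_append.mp ha
  · by_cases hb : b <+: u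
    · rw [flipAB_of_b hlen hne hb,
        flipAB_of_a hlen hne (List.prefix_append _ _), List.drop_left]
      exact List.prefix_iff_eq_append.mp hb
    · rw [flipAB_of_none ha hb, flipAB_of_none ha hb]

/-- If `u` is a proper prefix of `a` and `c` is the penultimate prefix of `a`,
then `u <+: c`. -/
lemma prefix_of_proper (hca : c <+: a) (hcl : c.length + 1 = a.length)
    {u : List Bool} (hua : u <+: a) (hune : u ≠ a) : u <+: c := by
  have hul : u.length ≤ c.length := by
    rcases lt_or_eq_of_le hua.length_le with h | h
    · omega
    · exact absurd (hua.eq_of_length h) hune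
  have h1 := List.prefix_iff_eq_take.mp hua
  have h2 := List.prefix_iff_eq_take.mp hca
  have key : c.take u.length = u := by
    rw [h2, List.take_take, min_eq_left hul, ← h1]
  exact key ▸ List.take_prefix u.length c

include hlen hne in
lemma flipAB_mono (hca : c <+: a) (hcb : c <+: b) (hcl : c.length + 1 = a.length)
    {u v : List Bool} (h : u <+: v) : flipAB a b u <+: flipAB a b v := by
  by_cases hau : a <+: u
  · rw [flipAB_of_a hlen hne hau, flipAB_of_a hlen hne (hau.trans h)]
    rw [List.prefix_append_right_inj]
    obtain ⟨t, rfl⟩ := h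
    rw [List.drop_append_of_le_length hau.length_le]
    exact List.prefix_append _ _
  · by_cases hbu : b <+: u
    · rw [flipAB_of_b hlen hne hbu, flipAB_of_b hlen hne (hbu.trans h)]
      rw [List.prefix_append_right_inj]
      obtain ⟨t, rfl⟩ := h
      rw [List.drop_append_of_le_length hbu.length_le]
      exact List.prefix_append _ _
    · rw [flipAB_of_none hau hbu]
      by_cases hav : a <+: v
      · rw [flipAB_of_a hlen hne hav]
        rcases List.prefix_or_prefix_of_prefix h hav with hua | hau'
        · have hune : u ≠ a := fun he => hau (he ▸ List.prefix_refl _)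
          exact ((prefix_of_proper hca hcl hua hune).trans hcb).trans
            (List.prefix_append _ _)
        · exact absurd hau' hau
      · by_cases hbv : b <+: v
        · rw [flipAB_of_b hlen hne hbv]
          rcases List.prefix_or_prefix_of_prefix h hbv with hub | hbu'
          · have hune : u ≠ b := fun he => hbu (he ▸ List.prefix_refl _)
            exact ((prefix_of_proper hcb (hlen ▸ hcl) hub hune).trans hca).trans
              (List.prefix_append _ _)
          · exact absurd hbu' hbu
        · rw [flipAB_of_none hav hbv]; exact h

end flip

/-- The flip map as an automorphism of `(2^{<ω}, ⊑)`. -/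
def flipEquiv (s : ℕ → Bool) (N : ℕ) : (List Bool) ≃[prefixLang] (List Bool) := by
  set a := seg s N ++ [s N] with ha
  set b := seg s N ++ [!s N] with hb
  have hlen : a.length = b.length := by simp [ha, hb]
  have hne : a ≠ b := by
    intro h
    have := List.append_cancel_left h
    simp at this
  have hca : seg s N <+: a := List.prefix_append _ _
  have hcb : seg s N <+: b := List.prefix_append _ _
  have hcl : (seg s N).length + 1 = a.length := by simp [ha]
  refine ⟨⟨flipAB a b, flipAB a b, flipAB_invol hlen hne, flipAB_invol hlen hne⟩,
    fun f _ => Empty.elim f, ?_⟩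
  intro n r x
  cases r with
  | sqle =>
    show flipAB a b (x 0) <+: flipAB a b (x 1) ↔ x 0 <+: x 1
    constructor
    · intro h
      have := flipAB_mono hlen hne hca hcb hcl h
      rwa [flipAB_invol hlen hne, flipAB_invol hlen hne] at this
    · exact flipAB_mono hlen hne hca hcb hcl

lemma flipEquiv_apply (s : ℕ → Bool) (N : ℕ) (u : List Bool) :
    flipEquiv s N u = flipAB (seg s N ++ [s N]) (seg s N ++ [!s N]) u := rfl

/-- **No branch of `(2^{<ω}, ⊑)` is definable with parameters.** -/
theorem branch_not_definable (s : ℕ → Bool) :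
    ¬ Set.Definable (Set.univ : Set (List Bool)) prefixLang
        {v : Fin 1 → List Bool | ∃ m : ℕ, v 0 = seg s m} := by
  intro h
  rw [Set.definable_iff_finitely_definable] at h
  obtain ⟨A0, -, h⟩ := h
  rw [Set.definable_iff_exists_formula_sum] at h
  obtain ⟨φ, hφ⟩ := h
  -- choose N above the lengths of all parameters
  set N := A0.sup List.length with hN
  set a := seg s N ++ [s N] with ha
  set b := seg s N ++ [!s N] with hb
  have hlen : a.length = b.length := by simp [ha, hb]
  have hne : a ≠ b := by
    intro h
    have := List.append_cancel_left h
    simp at this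
  set g := flipEquiv s N with hg
  -- g fixes all parameters
  have hfix : ∀ x : A0, g (x : List Bool) = x := by
    rintro ⟨x, hx⟩
    have hxl : x.length ≤ N := Finset.le_sup hx
    show flipAB a b x = x
    apply flipAB_of_none
    · intro hp
      have := hp.length_le
      simp [ha, seg_length] at this
      omega
    · intro hp
      have := hp.length_le
      simp [hb, seg_length] at this
      omega
  -- seg s (N+1) = a is in the set
  have hmem : (fun _ : Fin 1 => a) ∈
      {v : Fin 1 → List Bool | ∃ m : ℕ, v 0 = seg s m} := by
    exact ⟨N + 1, (seg_succ s N).symm⟩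
  have hga : g a = b := by
    show flipAB a b a = b
    rw [flipAB_of_a hlen hne (List.prefix_refl _), List.drop_length, List.append_nil]
  -- transfer along the automorphism
  rw [hφ] at hmem
  have hmem' : φ.Realize (g ∘ Sum.elim (Subtype.val : A0 → List Bool) (fun _ : Fin 1 => a)) := by
    rw [StrongHomClass.realize_formula]
    exact hmem
  have hcomp : (g ∘ Sum.elim (Subtype.val : A0 → List Bool) (fun _ : Fin 1 => a)) =
      Sum.elim (Subtype.val : A0 → List Bool) (fun _ : Fin 1 => b) := by
    funext x
    rcases x with x | x
    · simpa using hfix x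
    · simpa using hga
  rw [hcomp] at hmem'
  have : (fun _ : Fin 1 => b) ∈ {v : Fin 1 → List Bool | ∃ m : ℕ, v 0 = seg s m} := by
    rw [hφ]; exact hmem'
  obtain ⟨m, hm⟩ := this
  simp only at hm
  have hml : m = N + 1 := by
    have := congrArg List.length hm
    simp [hb, seg_length] at this
    omega
  subst hml
  rw [seg_succ] at hm
  have := List.append_cancel_left (hm.symm ▸ rfl : seg s N ++ [!s N] = seg s N ++ [s N])
  simp at this
end BinaryTree
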